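/- Let f ∈ ℤ[x] be monic of degree n with n distinct roots α_1,…,α_n in a fixed algebraic closure K of ℚ, and let L = ℚ(α_1,…,α_n). Let H ≤ G ≤ Sym(n), assume p(τ) ∈ G for all τ ∈ Gal(L/ℚ), let F ∈ ℤ[X_1,…,X_n] be H-invariant, and let R_F(T) := ∏_{σ ∈ G//H} (T − F^σ(α_1,…,α_n)). Assume R_F is squarefree and that A ∈ ℤ[T] is a monic divisor of R_F in ℤ[T] of degree m. Then there exist σ_1,…,σ_m ∈ G, lying in pairwise distinct right cosets of H, such that A(T) = ∏_{i=1}^m (T − F^{σ_i}(α_1,…,α_n)) in L[T]; moreover, setting B := {Hσ_1,…,Hσ_m} (a set of right cosets of H in G), for every τ ∈ Gal(L/ℚ) the right-multiplication action of p(τ) on the right cosets H\G maps B onto B. Equivalently, Gal(f) ≤ ρ^{-1}(Stab_{ρ(G)}(B)) where ρ : G → Sym(H\G) is the permutation action of G on the right cosets of H. -/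

import Mathlib

/-!
The roots of the resolvent are the values `β(σ) = F^σ(α)`, which depend only on the coset `Hσ`
and, by squarefreeness, are distinct on the representatives. A monic divisor `A` of the resolvent
is therefore the product of `T - β(r)` over those representatives `r` with `A(β(r)) = 0`.
Since `τ⁻¹` sends `β(σ)` to `β(σ p(τ))` and, `A` having integer coefficients, preserves the roots
of `A`, the representative of the coset of `σ_i p(τ)` is again one of those `r`: this is the
stability of `B`.
-/

open MvPolynomial Polynomial

/-- The (right) action `F ↦ F^σ` of `Sym(n)` on multivariate polynomials by permuting
the variables.  It satisfies `(F^σ)^τ = F^{στ}`, so that `F^σ` depends only on the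
*right* coset `Hσ` when `F` is `H`-invariant, as in the paper; up to the substitution
`σ ↦ σ⁻¹` it is the action `X_i ↦ X_{σ(i)}`. -/
noncomputable def permAct {n : ℕ} (σ : Equiv.Perm (Fin n))
    (F : MvPolynomial (Fin n) ℤ) : MvPolynomial (Fin n) ℤ :=
  rename (⇑σ⁻¹) F

namespace Polynomial

variable {ι : Type*}

theorem injOn_of_squarefree_prod_X_sub_C {R : Type*} [CommRing R] [Nontrivial R]
    {s : Finset ι} {β : ι → R} (h : Squarefree (∏ r ∈ s, (X - C (β r)))) :
    Set.InjOn β s := by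
  classical
  intro r hr r' hr' hββ
  by_contra hne
  refine not_isUnit_X_sub_C (β r) (h _ ?_)
  rw [← Finset.mul_prod_erase s _ hr,
    ← Finset.mul_prod_erase (s.erase r) _ (Finset.mem_erase.2 ⟨Ne.symm hne, hr'⟩), hββ]
  exact mul_dvd_mul_left _ (dvd_mul_right _ _)

theorem eq_prod_filter_isRoot_of_dvd_prod_X_sub_C {K : Type*} [Field K] [DecidableEq K]
    {s : Finset ι} {β : ι → K} (hβ : Set.InjOn β s) {Q : K[X]} (hQ : Q.Monic)
    (hdvd : Q ∣ ∏ r ∈ s, (X - C (β r))) :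
    Q = ∏ r ∈ s with Q.IsRoot (β r), (X - C (β r)) := by
  have hP : ∏ r ∈ s, (X - C (β r)) = ((s.val.map β).map fun a => X - C a).prod := by
    rw [Multiset.map_map]; rfl
  have hP0 : ∏ r ∈ s, (X - C (β r)) ≠ 0 := by
    rw [hP]; exact (monic_multiset_prod_of_monic _ _ fun a _ => monic_X_sub_C a).ne_zero
  have hle : Q.roots ≤ s.val.map β := by
    simpa only [hP, roots_multiset_prod_X_sub_C] using roots.le_of_dvd hP0 hdvd
  have hnodup : (s.val.map β).Nodup := s.nodup.map_on fun x hx y hy => hβ hx hy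
  have hroots : Q.roots = (s.filter fun r => Q.IsRoot (β r)).val.map β := by
    refine (Multiset.Nodup.ext (Multiset.nodup_of_le hle hnodup)
      (Multiset.nodup_of_le (Multiset.map_le_map (Multiset.filter_le _ _)) hnodup)).2 fun b => ?_
    constructor
    · intro hb
      obtain ⟨r, hr, rfl⟩ := Multiset.mem_map.1 (Multiset.mem_of_le hle hb)
      exact Multiset.mem_map_of_mem _ (Multiset.mem_filter.2 ⟨hr, (mem_roots hQ.ne_zero).1 hb⟩)
    · intro hb
      obtain ⟨r, hr, rfl⟩ := Multiset.mem_map.1 hb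
      exact (mem_roots hQ.ne_zero).2 (Multiset.mem_filter.1 hr).2
  have hsplits : Q.Splits := (Splits.prod fun r _ => Splits.X_sub_C (β r)).of_dvd hP0 hdvd
  calc Q = (Q.roots.map fun a => X - C a).prod := hsplits.eq_prod_roots_of_monic hQ
    _ = _ := by rw [hroots, Multiset.map_map]; rfl

end Polynomial

section permAct

variable {n : ℕ}

theorem permAct_permAct (s t : Equiv.Perm (Fin n)) (F : MvPolynomial (Fin n) ℤ) :
    permAct s (permAct t F) = permAct (t * s) F := by
  simp only [permAct, rename_rename, mul_inv_rev, Equiv.Perm.coe_mul]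

theorem permAct_eq_of_mul_inv_mem {H : Subgroup (Equiv.Perm (Fin n))}
    {F : MvPolynomial (Fin n) ℤ} (hF : ∀ h ∈ H, permAct h F = F)
    {g r : Equiv.Perm (Fin n)} (hgr : g * r⁻¹ ∈ H) : permAct g F = permAct r F := by
  rw [← inv_mul_cancel_right g r, ← permAct_permAct, hF _ hgr]

theorem map_aeval_permAct {S T : Type*} [CommRing S] [CommRing T] (φ : S →+* T)
    {v : Fin n → S} {w : Fin n → T} {π : Equiv.Perm (Fin n)} (hφ : ∀ i, φ (v i) = w (π i))
    (σ : Equiv.Perm (Fin n)) (F : MvPolynomial (Fin n) ℤ) :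
    φ (MvPolynomial.aeval v (permAct σ F)) = MvPolynomial.aeval w (permAct (σ * π⁻¹) F) := by
  change φ.toIntAlgHom _ = _
  simp only [permAct, aeval_rename, comp_aeval_apply, mul_inv_rev, inv_inv]
  congr 2
  funext i
  simp [hφ]

end permAct

theorem Polynomial.IsRoot.map_int {S T : Type*} [CommRing S] [CommRing T] (φ : S →+* T)
    {A : ℤ[X]} {x : S} (h : (A.map (algebraMap ℤ S)).IsRoot x) :
    (A.map (algebraMap ℤ T)).IsRoot (φ x) := by
  simpa only [Polynomial.map_map, algebraMap_int_eq, RingHom.ext_int (φ.comp (Int.castRingHom S))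
    (Int.castRingHom T)] using h.map (f := φ)

theorem statement15_general (n m : ℕ) (K : Type*) [Field K] [Algebra ℚ K]
    (L : IntermediateField ℚ K)
    (αL : Fin n → ↥L)
    (G H : Subgroup (Equiv.Perm (Fin n)))
    (p : (↥L ≃ₐ[ℚ] ↥L) → Equiv.Perm (Fin n))
    (hp : ∀ (τ : ↥L ≃ₐ[ℚ] ↥L) (i : Fin n), τ (αL i) = αL (p τ i))
    (hGal : ∀ τ : ↥L ≃ₐ[ℚ] ↥L, p τ ∈ G)
    (F : MvPolynomial (Fin n) ℤ)
    (hF : ∀ h ∈ H, permAct h F = F)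
    (R : Finset (Equiv.Perm (Fin n)))
    (hRG : ∀ r ∈ R, r ∈ G)
    (hreps : ∀ g ∈ G, ∃! r, r ∈ R ∧ g * r⁻¹ ∈ H)
    (hsqf : Squarefree (∏ r ∈ R, (Polynomial.X -
        Polynomial.C (MvPolynomial.aeval αL (permAct r F) : ↥L))))
    (A : Polynomial ℤ) (hA : A.Monic) (hAdeg : A.natDegree = m)
    (hdvd : A.map (algebraMap ℤ ↥L) ∣
      ∏ r ∈ R, (Polynomial.X - Polynomial.C (MvPolynomial.aeval αL (permAct r F) : ↥L))) :
    ∃ σ : Fin m → Equiv.Perm (Fin n),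
      (∀ i, σ i ∈ G) ∧
      (∀ i j, σ i * (σ j)⁻¹ ∈ H → i = j) ∧
      (A.map (algebraMap ℤ ↥L) =
        ∏ i : Fin m, (Polynomial.X -
          Polynomial.C (MvPolynomial.aeval αL (permAct (σ i) F) : ↥L))) ∧
      (∀ τ : ↥L ≃ₐ[ℚ] ↥L, ∀ i : Fin m, ∃ j : Fin m, σ i * p τ * (σ j)⁻¹ ∈ H) := by
  classical
  set β : Equiv.Perm (Fin n) → L := fun r => MvPolynomial.aeval αL (permAct r F)
  have hβinj : Set.InjOn β R := injOn_of_squarefree_prod_X_sub_C hsqf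
  have hβcoset {g r} (hgr : g * r⁻¹ ∈ H) : β g = β r :=
    congrArg (MvPolynomial.aeval αL) (permAct_eq_of_mul_inv_mem hF hgr)
  have hβgal (τ : L ≃ₐ[ℚ] L) (g) : τ.symm (β g) = β (g * p τ) := by
    have hτα (i : Fin n) : τ.symm (αL i) = αL ((p τ)⁻¹ i) :=
      τ.symm_apply_eq.2 (by rw [hp]; simp)
    have := map_aeval_permAct (τ.symm : L →+* L) hτα g F
    rwa [inv_inv] at this
  set S := R.filter fun r => (A.map (algebraMap ℤ L)).IsRoot (β r)
  have hAS : A.map (algebraMap ℤ L) = ∏ r ∈ S, (Polynomial.X - Polynomial.C (β r)) :=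
    eq_prod_filter_isRoot_of_dvd_prod_X_sub_C hβinj (hA.map _) hdvd
  have hS : S.card = m := by
    rw [← hAdeg, ← hA.natDegree_map (algebraMap ℤ L), hAS, natDegree_finsetProd_X_sub_C_eq_card]
  set E := (S.equivFinOfCardEq hS).symm
  have hSR (x : S) : (x : Equiv.Perm (Fin n)) ∈ R := (Finset.mem_filter.1 x.2).1
  refine ⟨fun i => E i, fun i => hRG _ (hSR _),
    fun i j hij => E.injective (Subtype.ext (hβinj (hSR _) (hSR _) (hβcoset hij))), ?_,
    fun τ i => ?_⟩
  · rw [hAS, ← Finset.prod_coe_sort, ← E.prod_comp]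
  · obtain ⟨r, ⟨hrR, hr⟩, -⟩ := hreps _ (G.mul_mem (hRG _ (hSR (E i))) (hGal τ))
    have hrS : r ∈ S := Finset.mem_filter.2 ⟨hrR, by
      rw [← hβcoset hr, ← hβgal]
      exact (Finset.mem_filter.1 (E i).2).2.map_int (τ.symm : L →+* L)⟩
    exact ⟨E.symm ⟨r, hrS⟩, by simpa using hr⟩

/-- Theorem on factors of the resolvent.  In the resolvent setting
(monic `f ∈ ℤ[x]` with distinct roots `α_1,…,α_n` in an algebraic closure `K` of `ℚ`,
splitting field `L`, `H ≤ G ≤ Sym(n)` with `Gal(f) ≤ G`, `F` an `H`-invariant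
polynomial, `R_F(T) = ∏_{σ ∈ G//H}(T − F^σ(α))`), assume `R_F` is squarefree and `A`
is a monic divisor of `R_F` in `ℤ[T]` of degree `m`.  Then there are `σ_1,…,σ_m ∈ G`
in pairwise distinct right cosets of `H` with `A(T) = ∏_{i=1}^m (T − F^{σ_i}(α))`, and
for every `τ ∈ Gal(L/ℚ)` the right-multiplication action of `p(τ)` on the right cosets
`H\G` maps `B := {Hσ_1,…,Hσ_m}` onto itself (i.e. for each `i` there is `j` with
`H σ_i p(τ) = H σ_j`); equivalently `Gal(f) ≤ ρ⁻¹(Stab_{ρ(G)}(B))`. -/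
theorem statement15 (n m : ℕ) (K : Type*) [Field K] [Algebra ℚ K] [IsAlgClosure ℚ K]
    (f : Polynomial ℤ) (hmonic : f.Monic) (hdeg : f.natDegree = n)
    (α : Fin n → K) (hinj : Function.Injective α)
    (hroots : f.map (algebraMap ℤ K) = ∏ i : Fin n, (Polynomial.X - Polynomial.C (α i)))
    (L : IntermediateField ℚ K) (hL : L = IntermediateField.adjoin ℚ (Set.range α))
    (αL : Fin n → ↥L) (hαL : ∀ i, (αL i : K) = α i)
    (G H : Subgroup (Equiv.Perm (Fin n))) (hHG : H ≤ G)
    (p : (↥L ≃ₐ[ℚ] ↥L) → Equiv.Perm (Fin n))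
    (hp : ∀ (τ : ↥L ≃ₐ[ℚ] ↥L) (i : Fin n), τ (αL i) = αL (p τ i))
    (hGal : ∀ τ : ↥L ≃ₐ[ℚ] ↥L, p τ ∈ G)
    (F : MvPolynomial (Fin n) ℤ)
    (hF : ∀ h ∈ H, permAct h F = F)
    (R : Finset (Equiv.Perm (Fin n)))
    (hRG : ∀ r ∈ R, r ∈ G)
    (hreps : ∀ g ∈ G, ∃! r, r ∈ R ∧ g * r⁻¹ ∈ H)
    (hsqf : Squarefree (∏ r ∈ R, (Polynomial.X -
        Polynomial.C (MvPolynomial.aeval αL (permAct r F) : ↥L))))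
    (A : Polynomial ℤ) (hA : A.Monic) (hAdeg : A.natDegree = m)
    (hdvd : A.map (algebraMap ℤ ↥L) ∣
      ∏ r ∈ R, (Polynomial.X - Polynomial.C (MvPolynomial.aeval αL (permAct r F) : ↥L))) :
    ∃ σ : Fin m → Equiv.Perm (Fin n),
      (∀ i, σ i ∈ G) ∧
      (∀ i j, σ i * (σ j)⁻¹ ∈ H → i = j) ∧
      (A.map (algebraMap ℤ ↥L) =
        ∏ i : Fin m, (Polynomial.X -
          Polynomial.C (MvPolynomial.aeval αL (permAct (σ i) F) : ↥L))) ∧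
      (∀ τ : ↥L ≃ₐ[ℚ] ↥L, ∀ i : Fin m, ∃ j : Fin m, σ i * p τ * (σ j)⁻¹ ∈ H) :=
  statement15_general n m K L αL G H p hp hGal F hF R hRG hreps hsqf A hA hAdeg hdvd
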